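/- Define H(x,y,p₁,p₂) = y^{-4/3}( (3/2)(9y³+2)y p₁² - (9y³-1) p₁ p₂ + (3/2)y² p₂² ) for y > 0. Then {H, p₁} = ∂H/∂x = 0, so p₁ is a linear first integral, and moreover H, p₁, and the cubic integral T of the previous statement are functionally independent on a dense open subset (their differentials are linearly independent at a generic point), establishing superintegrability. -/

import Mathlib

/-- The geodesic Hamiltonian of Example 2. -/
noncomputable def Hex2 : ℝ → ℝ → ℝ → ℝ → ℝ :=
  fun _ y p₁ p₂ => y ^ (-(4 : ℝ) / 3) *
    ((3 / 2) * (9 * y ^ 3 + 2) * y * p₁ ^ 2 - (9 * y ^ 3 - 1) * p₁ * p₂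
      + (3 / 2) * y ^ 2 * p₂ ^ 2)

/-- The linear first integral L = p₁. -/
noncomputable def Lex2 : ℝ → ℝ → ℝ → ℝ → ℝ := fun _ _ p₁ _ => p₁

/-- The cubic first integral of Example 2. -/
noncomputable def Tex2 : ℝ → ℝ → ℝ → ℝ → ℝ :=
  fun x y p₁ p₂ =>
    (1 / 2) * (2 * x - 3 * y ^ 2 * (18 * y ^ 3 + 5) * (18 * y ^ 3 + 1)) * p₁ ^ 3
    + 3 * y * (162 * y ^ 6 + 36 * y ^ 3 + 1) * p₂ * p₁ ^ 2
    - 18 * y ^ 3 * (9 * y ^ 3 + 1) * p₂ ^ 2 * p₁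
    + 18 * y ^ 5 * p₂ ^ 3

/-- Gradient of a function on T*ℝ² with respect to (x, y, p₁, p₂). -/
noncomputable def grad4 (F : ℝ → ℝ → ℝ → ℝ → ℝ) (x y p₁ p₂ : ℝ) : Fin 4 → ℝ :=
  ![deriv (fun x' => F x' y p₁ p₂) x,
    deriv (fun y' => F x y' p₁ p₂) y,
    deriv (fun p₁' => F x y p₁' p₂) p₁,
    deriv (fun p₂' => F x y p₁ p₂') p₂]


lemma Hex2_deriv_x (x y p₁ p₂ : ℝ) : deriv (fun x' => Hex2 x' y p₁ p₂) x = 0 := by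
  simp [Hex2]

lemma Tex2_deriv_x : deriv (fun x' : ℝ => Tex2 x' 1 1 0) 0 = 1 := by
  have h : (fun x' : ℝ => Tex2 x' 1 1 0) = fun x' => x' - 3 * 23 * 19 / 2 := by
    funext x'; simp [Tex2]; ring
  rw [h]; simp

lemma Hex2_deriv_p2 : deriv (fun p₂' : ℝ => Hex2 0 1 1 p₂') 0 = -8 := by
  have h : (fun p₂' : ℝ => Hex2 0 1 1 p₂') = fun p => 33/2 - 8*p + (3/2)*p^2 := by
    funext p; simp [Hex2, Real.one_rpow]; ring
  rw [h]
  have h1 : HasDerivAt (fun p:ℝ => 33/2 - 8*p + (3/2)*p^2) (-8) 0 := by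
    have ha : HasDerivAt (fun p:ℝ => 33/2 - 8*p) (-8) 0 := by
      simpa using (((hasDerivAt_id (0:ℝ)).const_mul (8:ℝ)).const_sub (33/2 : ℝ))
    have hb : HasDerivAt (fun p:ℝ => (3/2)*p^2) 0 0 := by
      simpa using (hasDerivAt_pow 2 (0:ℝ)).const_mul (3/2 : ℝ)
    have h2 := ha.add hb
    rw [add_zero] at h2
    exact h2
  exact h1.deriv

/-- H does not depend on x (so {H, p₁} = ∂H/∂x = 0 and p₁ is a linear first
integral), and H, p₁, T are functionally independent: there is a point with
y > 0 where their differentials are linearly independent. -/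
theorem stmt14 :
    (∀ x y p₁ p₂ : ℝ, 0 < y → deriv (fun x' => Hex2 x' y p₁ p₂) x = 0)
    ∧ ∃ x y p₁ p₂ : ℝ, 0 < y ∧
        LinearIndependent ℝ
          ![grad4 Hex2 x y p₁ p₂, grad4 Lex2 x y p₁ p₂, grad4 Tex2 x y p₁ p₂] := by
  constructor
  · intro x y p₁ p₂ _
    exact Hex2_deriv_x x y p₁ p₂
  · refine ⟨0, 1, 1, 0, one_pos, ?_⟩
    rw [Fintype.linearIndependent_iff]
    intro g hg
    have hG0 : grad4 Hex2 0 1 1 0 0 = 0 := by simp [grad4, Hex2_deriv_x]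
    have hG3 : grad4 Hex2 0 1 1 0 3 = -8 := by simp [grad4, Hex2_deriv_p2]
    have hL0 : grad4 Lex2 0 1 1 0 0 = 0 := by simp [grad4, Lex2]
    have hL2 : grad4 Lex2 0 1 1 0 2 = 1 := by simp [grad4, Lex2]
    have hL3 : grad4 Lex2 0 1 1 0 3 = 0 := by simp [grad4, Lex2]
    have hT0 : grad4 Tex2 0 1 1 0 0 = 1 := by simp [grad4, Tex2_deriv_x]
    simp only [Fin.sum_univ_three, Matrix.cons_val_zero, Matrix.cons_val_one,
      Matrix.head_cons, Matrix.cons_val_two, Matrix.tail_cons] at hg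
    have h0 := congrFun hg 0
    have h2 := congrFun hg 2
    have h3 := congrFun hg 3
    simp only [Pi.add_apply, Pi.smul_apply, smul_eq_mul, Pi.zero_apply,
      hG0, hG3, hL0, hL2, hL3, hT0] at h0 h2 h3
    have hg2 : g 2 = 0 := by linarith
    rw [hg2] at h3 h2
    have hg0 : g 0 = 0 := by linarith
    rw [hg0] at h2
    have hg1 : g 1 = 0 := by linarith
    intro i
    fin_cases i <;> assumption
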